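/- The element g = x_0 x_1 x_0^{-1} x_1^{-1} x_0 of F equals x_0 x_1 x_2^{-1}, satisfies Ψ(g) = x_0x_1 (so that g ∈ Ψ^{-1}(F⃗)), and g fixes no point of the open interval (0,1): g(t) ≠ t for every t ∈ (0,1). -/

import Mathlib

set_option maxHeartbeats 1000000

noncomputable section

/-- The unit interval `[0,1]` as a type. -/
abbrev I : Type := Set.Icc (0:ℝ) 1

/-- The underlying function of the generator `x₀` of Thompson's group `F`. -/
def x0fun (t : ℝ) : ℝ := if t ≤ 1/4 then 2*t else if t ≤ 1/2 then t + 1/4 else t/2 + 1/2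

/-- The inverse of `x0fun`. -/
def x0inv (t : ℝ) : ℝ := if t ≤ 1/2 then t/2 else if t ≤ 3/4 then t - 1/4 else 2*t - 1

/-- The underlying function of the generator `x₁` of Thompson's group `F`. -/
def x1fun (t : ℝ) : ℝ :=
  if t ≤ 1/2 then t else if t ≤ 5/8 then 2*t - 1/2 else if t ≤ 3/4 then t + 1/8 else t/2 + 1/2

/-- The inverse of `x1fun`. -/
def x1inv (t : ℝ) : ℝ :=
  if t ≤ 1/2 then t else if t ≤ 3/4 then t/2 + 1/4 else if t ≤ 7/8 then t - 1/8 else 2*t - 1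

/-- The generator `x₀` of Thompson's group `F`, as a bijection of `[0,1]`. -/
def x₀ : Equiv.Perm I where
  toFun t := ⟨x0fun t.1, by
    obtain ⟨h0, h1⟩ := Set.mem_Icc.mp t.2
    simp only [Set.mem_Icc, x0fun]
    split_ifs <;> constructor <;> linarith⟩
  invFun t := ⟨x0inv t.1, by
    obtain ⟨h0, h1⟩ := Set.mem_Icc.mp t.2
    simp only [Set.mem_Icc, x0inv]
    split_ifs <;> constructor <;> linarith⟩
  left_inv t := by
    obtain ⟨h0, h1⟩ := Set.mem_Icc.mp t.2
    apply Subtype.ext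
    show x0inv (x0fun t.1) = t.1
    simp only [x0fun, x0inv]
    split_ifs <;> linarith
  right_inv t := by
    obtain ⟨h0, h1⟩ := Set.mem_Icc.mp t.2
    apply Subtype.ext
    show x0fun (x0inv t.1) = t.1
    simp only [x0fun, x0inv]
    split_ifs <;> linarith

/-- The generator `x₁` of Thompson's group `F`, as a bijection of `[0,1]`. -/
def x₁ : Equiv.Perm I where
  toFun t := ⟨x1fun t.1, by
    obtain ⟨h0, h1⟩ := Set.mem_Icc.mp t.2
    simp only [Set.mem_Icc, x1fun]
    split_ifs <;> constructor <;> linarith⟩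
  invFun t := ⟨x1inv t.1, by
    obtain ⟨h0, h1⟩ := Set.mem_Icc.mp t.2
    simp only [Set.mem_Icc, x1inv]
    split_ifs <;> constructor <;> linarith⟩
  left_inv t := by
    obtain ⟨h0, h1⟩ := Set.mem_Icc.mp t.2
    apply Subtype.ext
    show x1inv (x1fun t.1) = t.1
    simp only [x1fun, x1inv]
    split_ifs <;> linarith
  right_inv t := by
    obtain ⟨h0, h1⟩ := Set.mem_Icc.mp t.2
    apply Subtype.ext
    show x1fun (x1inv t.1) = t.1
    simp only [x1fun, x1inv]
    split_ifs <;> linarith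

/-- Composition in Thompson's group `F` is from left to right: the product `f·g` in the paper
is the function `t ↦ g (f t)`.  In Lean, `Equiv.Perm` multiplication is composition from right
to left: `(f * g) t = f (g t)`.  Hence a paper product `a₁ a₂ ⋯ aₙ` corresponds to the Lean
product `aₙ * ⋯ * a₂ * a₁`.

`x i` is the standard generator `x_i` of Thompson's group `F`: here `x_0, x_1` are the explicit
piecewise-linear maps, and for `i ≥ 1`, `x_{i+1} = x_0^{-i} x_1 x_0^{i}` (left-to-right
composition), which in Lean's convention is `x₀ ^ i * x₁ * (x₀ ^ i)⁻¹`. -/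
def x (i : ℕ) : Equiv.Perm I := if i = 0 then x₀ else x₀ ^ (i-1) * x₁ * (x₀ ^ (i-1))⁻¹

/-- Thompson's group `F`, realized as the group of increasing piecewise-linear homeomorphisms of
`[0,1]` with dyadic breakpoints and slopes powers of 2; it is generated by `x_0` and `x_1`. -/
def F : Subgroup (Equiv.Perm I) := Subgroup.closure {x 0, x 1}

/-- The subgroup `G = ⟨x_0x_2, x_1x_2⟩` of `F` (products written left-to-right, so
`x_0x_2` is the Lean element `x 2 * x 0`). -/
def G : Subgroup (Equiv.Perm I) := Subgroup.closure {x 2 * x 0, x 2 * x 1}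

/-- Jones' subgroup `F⃗ = ⟨x_0x_1, x_1x_2, x_2x_3⟩` of `F` (products written left-to-right). -/
def JonesF : Subgroup (Equiv.Perm I) := Subgroup.closure {x 1 * x 0, x 2 * x 1, x 3 * x 2}

lemma x_mem_F (i : ℕ) : x i ∈ F := by
  have h0 : x 0 ∈ F := Subgroup.subset_closure (by simp)
  have h1 : x 1 ∈ F := Subgroup.subset_closure (by simp)
  have hx0 : x₀ ∈ F := by simpa [x] using h0
  have hx1 : x₁ ∈ F := by simpa [x] using h1
  rcases Nat.eq_zero_or_pos i with h | h
  · subst h; exact h0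
  · have : x i = x₀ ^ (i-1) * x₁ * (x₀ ^ (i-1))⁻¹ := by
      simp [x, Nat.pos_iff_ne_zero.mp h]
    rw [this]
    exact mul_mem (mul_mem (pow_mem hx0 _) hx1) (inv_mem (pow_mem hx0 _))

lemma y0_mem_G : x 2 * x 0 ∈ G := Subgroup.subset_closure (by simp)

lemma y1_mem_G : x 2 * x 1 ∈ G := Subgroup.subset_closure (by simp)

/-- The length `|w|` of an element of `F`: the minimal `n` such that `w` is a product of `n`
elements of `{x_i^{±1} : i ≥ 0}`.  This equals the length of the normal form of `w`. -/
def len (w : Equiv.Perm I) : ℕ :=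
  sInf {n | ∃ l : List (Equiv.Perm I), l.length = n ∧
    (∀ a ∈ l, ∃ i : ℕ, a = x i ∨ a = (x i)⁻¹) ∧ l.prod = w}

/-- The element of `F` given by the positive word `x_{i_1} x_{i_2} ⋯ x_{i_n}` (composition from
left to right), where `l = [i_1, i_2, …, i_n]`.  Since Lean's multiplication of permutations is
composition from right to left, this is the Lean product of the reversed list of letters. -/
def pp (l : List ℕ) : Equiv.Perm I := ((l.map x).reverse).prod

/-- `l = [i_1, …, i_n]` encodes a *block*: a positive normal form `x_{i_1}⋯x_{i_n}`
(so `i_1 ≤ ⋯ ≤ i_n`) with `i_1 ≠ i_n` and `i_j < i_1 + j` for all `j = 1, …, n`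
(here with 0-based indexing: `l[k] < l[0] + k + 1`). -/
def IsBlock (l : List ℕ) : Prop :=
  l ≠ [] ∧ l.Pairwise (· ≤ ·) ∧ l.headI ≠ l.getLastD 0 ∧
    ∀ k < l.length, l.getD k 0 < l.headI + k + 1

/-- The double coset `F⃗ a F⃗` of Jones' subgroup.  (As a set this does not depend on the
composition convention, since `u, v` range over all of `F⃗`.) -/
def dCoset (a : Equiv.Perm I) : Set (Equiv.Perm I) :=
  {w | ∃ u ∈ JonesF, ∃ v ∈ JonesF, w = v * a * u}

/-- A real number is dyadic if it has the form `a / 2^n` with `a, n` natural numbers. -/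
def IsDyadic (α : ℝ) : Prop := ∃ (a : ℕ) (n : ℕ), α = a / 2^n

/-- The subgroup of all permutations fixing every point of `U`. -/
def fixing (U : Set ℝ) : Subgroup (Equiv.Perm I) where
  carrier := {g | ∀ t : I, (t : ℝ) ∈ U → g t = t}
  one_mem' := fun _ _ => rfl
  mul_mem' := by
    intro a b ha hb t ht
    simp only [Equiv.Perm.mul_apply]
    rw [hb t ht, ha t ht]
  inv_mem' := by
    intro a ha t ht
    conv_lhs => rw [← ha t ht]
    exact a.symm_apply_apply t

/-- `H_U`: the stabilizer in `F` of the finite set `U ⊂ (0,1)`, i.e. the subgroup of all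
elements of `F` fixing every point of `U`. -/
def HU (U : Set ℝ) : Subgroup (Equiv.Perm I) := F ⊓ fixing U

/-- The element `g = x_0 x_1 x_0⁻¹ x_1⁻¹ x_0` of `F` (written left-to-right in the paper;
in Lean's right-to-left convention it is `x 0 * (x 1)⁻¹ * (x 0)⁻¹ * x 1 * x 0`). -/
def g13 : Equiv.Perm I := x 0 * (x 1)⁻¹ * (x 0)⁻¹ * x 1 * x 0

lemma g13_mem_F : g13 ∈ F := by
  unfold g13
  exact mul_mem (mul_mem (mul_mem (mul_mem (x_mem_F 0) (inv_mem (x_mem_F 1)))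
    (inv_mem (x_mem_F 0))) (x_mem_F 1)) (x_mem_F 0)

/-!
Since `x_2 = x_0⁻¹ x_1 x_0`, the identity `g = x_0 x_1 x_2⁻¹` is a formal consequence of the
definition. Expanding `Ψ(g)` in `Ψ(x_0) = x_0 x_2` and `Ψ(x_1) = x_1 x_2` leaves `x_0 x_1` as soon as
`x_0 x_1⁻¹` commutes with `x_2`, which holds because their supports `[0,3/4]` and `[3/4,1]` meet
only in a point. Finally `g = (x_0 x_1) x_2⁻¹` is computed piecewise:
`g(t) = 2t, t/2 + 9/16, t/4 + 11/16, t/2 + 1/2` on `[0,3/8], [3/8,1/2], [1/2,3/4], [3/4,1]`,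
so `g(t) > t` on `(0,1)`.
-/

open Equiv

lemma x_zero : x 0 = x₀ := by simp [x]

lemma x_one : x 1 = x₁ := by simp [x]

lemma x_two : x 2 = x 0 * x 1 * (x 0)⁻¹ := by simp [x]

lemma g13_eq_x_two_inv_mul : g13 = (x 2)⁻¹ * (x 1 * x 0) := by
  rw [g13, x_two]; group

lemma coe_x_one_mul_x_zero_apply (t : I) :
    ((x 1 * x 0) t : ℝ) =
      if (t : ℝ) ≤ 3/8 then 2 * (t : ℝ) else if (t : ℝ) ≤ 1/2 then (t : ℝ) + 3/8
      else (t : ℝ) / 4 + 3/4 := by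
  obtain ⟨h0, h1⟩ := t.2
  change x1fun (x0fun t) = _
  unfold x0fun x1fun
  split_ifs <;> linarith

lemma coe_x_two_inv_apply (t : I) :
    ((x 2)⁻¹ t : ℝ) =
      if (t : ℝ) ≤ 3/4 then (t : ℝ) else if (t : ℝ) ≤ 7/8 then (t : ℝ) / 2 + 3/8
      else if (t : ℝ) ≤ 15/16 then (t : ℝ) - 1/16 else 2 * (t : ℝ) - 1 := by
  obtain ⟨h0, h1⟩ := t.2
  rw [x_two, x_zero, x_one]
  change x0fun (x1inv (x0inv t)) = _
  unfold x0fun x1inv x0inv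
  split_ifs <;> linarith

lemma x_two_apply_of_le {t : I} (ht : (t : ℝ) ≤ 3/4) : x 2 t = t := by
  rw [eq_comm, ← Perm.inv_eq_iff_eq]
  exact Subtype.ext (by rw [coe_x_two_inv_apply, if_pos ht])

lemma x_one_inv_mul_x_zero_apply_of_le {t : I} (ht : 3/4 ≤ (t : ℝ)) : ((x 1)⁻¹ * x 0) t = t := by
  obtain ⟨h0, h1⟩ := t.2
  apply Subtype.ext
  rw [x_zero, x_one]
  change x1inv (x0fun t) = t
  unfold x0fun x1inv
  split_ifs <;> linarith

/-- `(x 1)⁻¹ * x 0` is the paper's `x_0 x_1⁻¹`; the commutation this yields is one of the two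
defining relations of `F`. -/
lemma disjoint_x_one_inv_mul_x_zero_x_two : Perm.Disjoint ((x 1)⁻¹ * x 0) (x 2) := by
  intro t
  rcases le_total (t : ℝ) (3/4) with ht | ht
  · exact Or.inr (x_two_apply_of_le ht)
  · exact Or.inl (x_one_inv_mul_x_zero_apply_of_le ht)

/-- `c * a` and `c * b` play the roles of `Ψ(x_0)` and `Ψ(x_1)`, and the word is `Ψ(g)`. -/
lemma left_mul_word_eq_of_commute {M : Type*} [Group M] {a b c : M} (hc : c = a * b * a⁻¹)
    (h : Commute (b⁻¹ * a) c) : c * a * (c * b)⁻¹ * (c * a)⁻¹ * (c * b) * (c * a) = b * a := by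
  have hconj : c⁻¹ * (a⁻¹ * b) * c = a⁻¹ * b := by
    have hab : Commute (a⁻¹ * b) c := by simpa using h.inv_left
    rw [mul_assoc, hab.eq, inv_mul_cancel_left]
  calc c * a * (c * b)⁻¹ * (c * a)⁻¹ * (c * b) * (c * a)
      = c * a * b⁻¹ * (c⁻¹ * (a⁻¹ * b) * c) * a := by group
    _ = b * a := by rw [hconj, hc]; group

lemma lt_g13_apply {t : I} (h0 : 0 < (t : ℝ)) (h1 : (t : ℝ) < 1) : (t : ℝ) < g13 t := by
  rw [g13_eq_x_two_inv_mul, Perm.mul_apply, coe_x_two_inv_apply, coe_x_one_mul_x_zero_apply]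
  split_ifs <;> linarith

/-- The element `g = x_0 x_1 x_0⁻¹ x_1⁻¹ x_0` equals `x_0 x_1 x_2⁻¹`, satisfies
`Ψ(g) = x_0x_1 ∈ F⃗` (so that `g ∈ Ψ⁻¹(F⃗)`), and fixes no point of `(0,1)`.  (Paper words are
left-to-right: `x_0 x_1 x_2⁻¹` is the Lean element `(x 2)⁻¹ * x 1 * x 0`, and `x_0x_1` is
`x 1 * x 0`.) -/
theorem stmt13 (Ψ : ↥F ≃* ↥G)
    (hΨ0 : (Ψ ⟨x 0, x_mem_F 0⟩ : Equiv.Perm I) = x 2 * x 0)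
    (hΨ1 : (Ψ ⟨x 1, x_mem_F 1⟩ : Equiv.Perm I) = x 2 * x 1) :
    g13 = (x 2)⁻¹ * x 1 * x 0 ∧
    (Ψ ⟨g13, g13_mem_F⟩ : Equiv.Perm I) = x 1 * x 0 ∧
    x 1 * x 0 ∈ JonesF ∧
    (∀ (t : ℝ) (h0 : 0 < t) (h1 : t < 1),
      g13 ⟨t, Set.mem_Icc.mpr ⟨h0.le, h1.le⟩⟩ ≠ ⟨t, Set.mem_Icc.mpr ⟨h0.le, h1.le⟩⟩) := by
  refine ⟨by rw [g13_eq_x_two_inv_mul, mul_assoc], ?_, Subgroup.subset_closure (by simp), ?_⟩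
  · let a : F := ⟨x 0, x_mem_F 0⟩
    let b : F := ⟨x 1, x_mem_F 1⟩
    have hg : (⟨g13, g13_mem_F⟩ : F) = a * b⁻¹ * a⁻¹ * b * a := rfl
    rw [hg]
    simp only [map_mul, map_inv, Subgroup.coe_mul, InvMemClass.coe_inv, a, b, hΨ0, hΨ1]
    exact left_mul_word_eq_of_commute x_two disjoint_x_one_inv_mul_x_zero_x_two.commute
  · intro t h0 h1 hfix
    exact (lt_g13_apply (t := ⟨t, _⟩) h0 h1).ne (congrArg Subtype.val hfix).symm
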